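/- Let ρ ∈ (0,1), σ > 0, SNR > 0, δ ∈ [0,1], and let N, K, i be positive integers with i ≤ K. Then ∫_ℝ φ(μ; 0, ρ/N) ∫_ℝ ∫_ℝ φ(x₂; (K−i)μ, (K−i)(1−ρ)/N) · ( ∫_ℝ φ(x₁; iμ, i(1−ρ)/N) · φ(y − σ(x₁ + x₂); 0, 1/SNR)^{1/(1+δ)} dx₁ )^{1+δ} dx₂ dy dμ = ( 1 + (1−ρ)·i·σ²·SNR / (N(1+δ)) )^{−δ/2}. (If K = i, the factor φ(x₂; 0, 0) is interpreted as a point mass at x₂ = 0, i.e. the x₂ integral is replaced by evaluation at x₂ = 0.) -/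

import Mathlib

/-!
Gaussian densities are closed under positive powers (`φ(·; m, v) ^ p` is a multiple of
`φ(·; m, v / p)`) and under convolution (variances add). Hence the `x₁`-integral is a constant
times a Gaussian density in `y`, the `x₂`-convolution keeps it one, and the `y`- and `μ`-integrals
are integrals of densities, equal to `1`. All that survives is the constant produced by raising to
the powers `1 / (1 + δ)` and `1 + δ`, which is `(1 + σ² vᵢ / (b (1 + δ))) ^ (-δ / 2)` for
`vᵢ = i (1 - ρ) / N` and noise variance `b = 1 / SNR`.
-/

open MeasureTheory

noncomputable section

/-- Density of the real Gaussian distribution `N(m, v)` with mean `m` and variance `v`. -/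
def gauss (x m v : ℝ) : ℝ := (2 * Real.pi * v) ^ (-(1:ℝ)/2) * Real.exp (-(x - m)^2 / (2*v))

/-- The inner (`x₁`-integral) factor raised to the power `1 + δ`. -/
def inner6 (ρ σ SNR δ : ℝ) (N i : ℕ) (μ y x₂ : ℝ) : ℝ :=
  (∫ x₁ : ℝ, gauss x₁ (i*μ) (i*(1-ρ)/N) *
    gauss (y - σ*(x₁+x₂)) 0 (1/SNR) ^ ((1:ℝ)/(1+δ))) ^ (1+δ)

open scoped Real

lemma gauss_nonneg {v : ℝ} (hv : 0 < v) (x m : ℝ) : 0 ≤ gauss x m v := by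
  unfold gauss; positivity

lemma gauss_eq_gaussianPDFReal {v : ℝ} (hv : 0 < v) (x m : ℝ) :
    gauss x m v = ProbabilityTheory.gaussianPDFReal m v.toNNReal x := by
  rw [gauss, ProbabilityTheory.gaussianPDFReal, Real.coe_toNNReal v hv.le, Real.sqrt_eq_rpow,
    ← Real.rpow_neg (by positivity)]
  norm_num

lemma integral_gauss {v : ℝ} (hv : 0 < v) (m : ℝ) : ∫ x, gauss x m v = 1 := by
  simp_rw [gauss_eq_gaussianPDFReal hv]
  exact ProbabilityTheory.integral_gaussianPDFReal_eq_one m (by simpa using hv)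

lemma gauss_sub_zero (x m v : ℝ) : gauss (x - m) 0 v = gauss x m v := by
  simp [gauss]

lemma integral_gauss_sub {v : ℝ} (hv : 0 < v) (a : ℝ) : ∫ y, gauss (y - a) 0 v = 1 := by
  simp_rw [gauss_sub_zero, integral_gauss hv]

/-- Completing the square: the second factor on the right is the posterior density of `x` given
`c`, when `x ∼ N(m, v)` and `c = s x + z` with independent noise `z ∼ N(0, w)`. -/
lemma gauss_mul_gauss {v w : ℝ} (hv : 0 < v) (hw : 0 < w) (x m c s : ℝ) :
    gauss x m v * gauss (c - s * x) 0 w =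
      gauss (c - s * m) 0 (s ^ 2 * v + w) *
        gauss x (m + s * v * (c - s * m) / (s ^ 2 * v + w)) (v * w / (s ^ 2 * v + w)) := by
  have hS : 0 < s ^ 2 * v + w := by positivity
  simp only [gauss, mul_mul_mul_comm, ← Real.exp_add,
    ← Real.mul_rpow (by positivity : (0:ℝ) ≤ 2 * π * v)
      (by positivity : (0:ℝ) ≤ 2 * π * w),
    ← Real.mul_rpow (by positivity : (0:ℝ) ≤ 2 * π * (s ^ 2 * v + w))
      (by positivity : (0:ℝ) ≤ 2 * π * (v * w / (s ^ 2 * v + w)))]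
  congr 2
  · field_simp
  · field_simp
    ring

lemma integral_gauss_mul_gauss {v w : ℝ} (hv : 0 < v) (hw : 0 < w) (m c s : ℝ) :
    ∫ x, gauss x m v * gauss (c - s * x) 0 w = gauss (c - s * m) 0 (s ^ 2 * v + w) := by
  simp_rw [gauss_mul_gauss hv hw, integral_const_mul]
  rw [integral_gauss (by positivity), mul_one]

lemma integral_integral_gauss_mul_gauss {v w : ℝ} (hv : 0 < v) (hw : 0 < w) (m a s : ℝ) :
    ∫ y, ∫ x, gauss x m v * gauss (y - a - s * x) 0 w = 1 := by
  simp_rw [integral_gauss_mul_gauss hv hw, sub_sub]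
  exact integral_gauss_sub (by positivity) _

lemma gauss_rpow {v p : ℝ} (hv : 0 < v) (hp : 0 < p) (x m : ℝ) :
    gauss x m v ^ p =
      (2 * π * v) ^ (-p / 2) * (2 * π * (v / p)) ^ (1 / 2 : ℝ) * gauss x m (v / p) := by
  have hvp : 0 < 2 * π * (v / p) := by positivity
  rw [gauss, gauss, Real.mul_rpow (by positivity) (Real.exp_pos _).le,
    ← Real.rpow_mul (by positivity), ← Real.exp_mul, mul_assoc ((2 * π * v) ^ (-p / 2)),
    ← mul_assoc ((2 * π * (v / p)) ^ (1 / 2 : ℝ)), ← Real.rpow_add hvp,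
    show (1 / 2 : ℝ) + -1 / 2 = 0 by norm_num, Real.rpow_zero, one_mul]
  congr 2
  · ring
  · field_simp

lemma rpow_integral_gauss_mul_gauss_rpow {v b p : ℝ} (hv : 0 < v) (hb : 0 < b) (hp : 0 < p)
    (m c s : ℝ) :
    (∫ x, gauss x m v * gauss (c - s * x) 0 b ^ (1 / p)) ^ p =
      (1 + s ^ 2 * v / (b * p)) ^ (-(p - 1) / 2) *
        gauss (c - s * m) 0 ((s ^ 2 * v + b * p) / p) := by
  have hV : 0 < s ^ 2 * v + b * p := by positivity
  simp_rw [gauss_rpow hb (one_div_pos.2 hp), mul_left_comm (gauss _ _ v), integral_const_mul,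
    integral_gauss_mul_gauss hv (div_pos hb (one_div_pos.2 hp)), div_div_eq_mul_div, div_one]
  rw [Real.mul_rpow (by positivity) (gauss_nonneg hV _ _), gauss_rpow hV hp, ← mul_assoc]
  congr 1
  have hratio : 1 + s ^ 2 * v / (b * p) = 2 * π * (s ^ 2 * v + b * p) / (2 * π * b * p) := by
    field_simp
    ring
  rw [hratio, mul_div_assoc', ← mul_assoc, ← mul_assoc]
  generalize hB : 2 * π * b = B
  generalize hW : 2 * π * (s ^ 2 * v + b * p) = W
  have hB0 : 0 < B := hB ▸ by positivity
  have hW0 : 0 < W := hW ▸ by positivity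
  refine Real.log_injOn_pos (Set.mem_Ioi.2 (by positivity)) (Set.mem_Ioi.2 (by positivity)) ?_
  rw [Real.log_mul (by positivity) (by positivity), Real.log_mul (by positivity) (by positivity),
    Real.log_rpow (by positivity), Real.log_mul (by positivity) (by positivity),
    Real.log_rpow hB0, Real.log_rpow (by positivity), Real.log_rpow hW0,
    Real.log_rpow (by positivity), Real.log_rpow (by positivity), Real.log_div hW0.ne' hp.ne',
    Real.log_div hW0.ne' (by positivity), Real.log_mul hB0.ne' hp.ne']
  field_simp
  ring

theorem statement6_general (ρ σ SNR δ : ℝ) (hρ : ρ ∈ Set.Ioo (0:ℝ) 1)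
    (hSNR : 0 < SNR) (hδ : δ ∈ Set.Icc (0:ℝ) 1)
    (N K i : ℕ) (hN : 1 ≤ N) (hi1 : 1 ≤ i) :
    (∫ μ : ℝ, gauss μ 0 (ρ/N) * ∫ y : ℝ,
      (if i < K then
        ∫ x₂ : ℝ, gauss x₂ (((K - i : ℕ)) * μ) (((K - i : ℕ)) * (1-ρ)/N) *
          inner6 ρ σ SNR δ N i μ y x₂
      else inner6 ρ σ SNR δ N i μ y 0)) =
    (1 + (1-ρ) * i * σ^2 * SNR / (N * (1+δ))) ^ (-δ/2) := by
  obtain ⟨hρ0, hρ1⟩ := hρ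
  have hN0 : (0:ℝ) < N := by exact_mod_cast hN
  have hi0 : (0:ℝ) < i := by exact_mod_cast hi1
  have hρ1' : 0 < 1 - ρ := sub_pos.2 hρ1
  have hp : 0 < 1 + δ := by linarith [hδ.1]
  set C := (1 + (1-ρ) * i * σ^2 * SNR / (N * (1+δ))) ^ (-δ/2) with hC
  set W := (σ ^ 2 * (i * (1 - ρ) / N) + 1 / SNR * (1 + δ)) / (1 + δ)
  have hW : 0 < W := by positivity
  have hC' :
      C = (1 + σ ^ 2 * (i * (1 - ρ) / N) / (1 / SNR * (1 + δ))) ^ (-(1 + δ - 1) / 2) := by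
    rw [hC]
    congr 1
    · field_simp
    · ring
  have hinner : ∀ μ y x₂,
      inner6 ρ σ SNR δ N i μ y x₂ = C * gauss (y - σ * (i * μ) - σ * x₂) 0 W := by
    intro μ y x₂
    simp_rw [inner6,
      show ∀ x₁, y - σ * (x₁ + x₂) = (y - σ * x₂) - σ * x₁ from fun _ ↦ by ring]
    rw [rpow_integral_gauss_mul_gauss_rpow (by positivity) (by positivity) hp, hC',
      sub_right_comm]
  have hρN : 0 < ρ / N := by positivity
  simp_rw [hinner]
  by_cases hiK : i < K
  · have hKi : (0:ℝ) < (K - i : ℕ) := by exact_mod_cast Nat.sub_pos_of_lt hiK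
    have hv₂ : 0 < ((K - i : ℕ) : ℝ) * (1 - ρ) / N := by positivity
    simp_rw [if_pos hiK, mul_left_comm (gauss _ _ _) C, integral_const_mul,
      integral_integral_gauss_mul_gauss hv₂ hW, mul_one, integral_mul_const, integral_gauss hρN,
      one_mul]
  · simp_rw [if_neg hiK, mul_zero, sub_zero, integral_const_mul, integral_gauss_sub hW, mul_one,
      integral_mul_const, integral_gauss hρN, one_mul]

theorem statement6 (ρ σ SNR δ : ℝ) (hρ : ρ ∈ Set.Ioo (0:ℝ) 1) (hσ : 0 < σ)
    (hSNR : 0 < SNR) (hδ : δ ∈ Set.Icc (0:ℝ) 1)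
    (N K i : ℕ) (hN : 1 ≤ N) (hK : 1 ≤ K) (hi1 : 1 ≤ i) (hiK : i ≤ K) :
    (∫ μ : ℝ, gauss μ 0 (ρ/N) * ∫ y : ℝ,
      (if i < K then
        ∫ x₂ : ℝ, gauss x₂ (((K - i : ℕ)) * μ) (((K - i : ℕ)) * (1-ρ)/N) *
          inner6 ρ σ SNR δ N i μ y x₂
      else inner6 ρ σ SNR δ N i μ y 0)) =
    (1 + (1-ρ) * i * σ^2 * SNR / (N * (1+δ))) ^ (-δ/2) :=
  statement6_general ρ σ SNR δ hρ hSNR hδ N K i hN hi1
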